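/- Let M be a p-matroid and C an np-circuit of M containing e but not a, where e = b. Then (C \ {e}) ∪ {γ} is a circuit of the es-splitting matroid M^e_{a,b}. -/

import Mathlib

open Matrix Set

variable {α : Type*}

/-- The columns of `A` indexed by `S` are linearly independent. -/
def ColIndep {m E F : Type*} [Semiring F] (A : Matrix m E F) (S : Set E) : Prop :=
  LinearIndependent F (fun s : S => Aᵀ s.1)

/-- `M` is the vector matroid of the matrix `A` (ground set all columns). -/
def IsVectorMatroid {m E F : Type*} [Semiring F] (M : Matroid E) (A : Matrix m E F) : Prop :=
  M.E = Set.univ ∧ ∀ S : Set E, M.Indep S ↔ ColIndep A S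

/-- The splitting matrix `A_{a,b}`: `A` with an extra row having `α` in columns `a`, `b`
and `0` elsewhere. -/
def splitMatrix {m E F : Type*} [Zero F] [DecidableEq E] (A : Matrix m E F) (a b : E) (α : F) :
    Matrix (m ⊕ Unit) E F :=
  Matrix.of fun i j =>
    Sum.elim (fun i' => A i' j) (fun _ => if j = a ∨ j = b then α else 0) i

/-- The column `z = (0,…,0,α)ᵀ`. -/
def zColumn {m F : Type*} [Zero F] (α : F) : m ⊕ Unit → F :=
  Sum.elim (fun _ => 0) (fun _ => α)

/-- The es-splitting matrix `A^e_{a,b}`: the splitting matrix with two extra columns,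
`Sum.inr 0 ↦ z = (0,…,0,α)ᵀ` and `Sum.inr 1 ↦ γ = e - z`. -/
def esMatrix {m E F : Type*} [Ring F] [DecidableEq E] (A : Matrix m E F) (a b e : E) (α : F) :
    Matrix (m ⊕ Unit) (E ⊕ Fin 2) F :=
  Matrix.of fun i j =>
    Sum.elim (fun x => splitMatrix A a b α i x)
      (fun k => if k = (0 : Fin 2) then zColumn α i
                else splitMatrix A a b α i e - zColumn α i) j

/-- A circuit of a matroid: a minimal dependent set. -/
def IsCircuit (M : Matroid α) (C : Set α) : Prop :=
  M.Dep C ∧ ∀ D, D ⊂ C → M.Indep D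

/-- The (ℕ-valued) rank of a set in a matroid: the largest size of an independent subset. -/
noncomputable def rk (M : Matroid α) (X : Set α) : ℕ :=
  sSup {n | ∃ I, I ⊆ X ∧ M.Indep I ∧ I.ncard = n}

/-- Every element lies in some circuit. -/
def Coloopless (M : Matroid α) : Prop :=
  ∀ x ∈ M.E, ∃ C, IsCircuit M C ∧ x ∈ C

/-- A simple matroid: every subset of the ground set with at most two elements is independent. -/
def SimpleMatroid (M : Matroid α) : Prop :=
  ∀ X ⊆ M.E, X.ncard ≤ 2 → M.Indep X

/-- A matroid is connected if every two distinct elements lie in a common circuit. -/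
def ConnectedMatroid (M : Matroid α) : Prop :=
  ∀ x ∈ M.E, ∀ y ∈ M.E, x ≠ y → ∃ C, IsCircuit M C ∧ x ∈ C ∧ y ∈ C

/-- A `k`-separation of `M`: a partition `{S, T}` of the ground set with `|S|, |T| ≥ k` and
`r(S) + r(T) - r(M) < k`. -/
def KSeparation (M : Matroid α) (k : ℕ) (S T : Set α) : Prop :=
  S ∪ T = M.E ∧ Disjoint S T ∧ k ≤ S.ncard ∧ k ≤ T.ncard ∧
    rk M S + rk M T < rk M M.E + k

/-- `M` is `n`-connected: it has no `k`-separation for `1 ≤ k ≤ n - 1`. -/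
def NConnected (M : Matroid α) (n : ℕ) : Prop :=
  ∀ k S T, 1 ≤ k → k ≤ n - 1 → ¬ KSeparation M k S T

/-- A matroid is Eulerian if its ground set is a disjoint union of circuits. -/
def Eulerian (M : Matroid α) : Prop :=
  ∃ (n : ℕ) (D : Fin n → Set α), (∀ i, IsCircuit M (D i)) ∧
    (∀ i j, i ≠ j → Disjoint (D i) (D j)) ∧ (⋃ i, D i) = M.E

/-- `C` carries a linear dependence of the columns of `A` with all coefficients nonzero
exactly on `C`, whose coefficients at `a` and `b` sum to zero. -/
def HasPDependence {m E F : Type*} [Semiring F] [Fintype E] (A : Matrix m E F)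
    (a b : E) (C : Set E) : Prop :=
  ∃ c : E → F, (∀ x, x ∈ C ↔ c x ≠ 0) ∧ (∑ x, c x • Aᵀ x) = 0 ∧ c a + c b = 0

/-- A `p`-circuit of the vector matroid `M = M[A]` with respect to `a, b`. -/
def IsPCircuit {m E F : Type*} [Semiring F] [Fintype E] (M : Matroid E) (A : Matrix m E F)
    (a b : E) (C : Set E) : Prop :=
  IsCircuit M C ∧ a ∈ C ∧ b ∈ C ∧ HasPDependence A a b C

/-- An `np`-circuit: a circuit meeting `{a, b}` that is not a `p`-circuit. -/
def IsNpCircuit {m E F : Type*} [Semiring F] [Fintype E] (M : Matroid E) (A : Matrix m E F)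
    (a b : E) (C : Set E) : Prop :=
  IsCircuit M C ∧ (C ∩ {a, b}).Nonempty ∧ ¬ HasPDependence A a b C

/-
Since `a ∉ C`, every `x ∈ C \ {b}` has a zero in the new row of the splitting matrix, and with
`e = b` the column `γ = b - z` has a zero there as well (`α - α = 0`). So relabelling `b` as `γ`
turns the columns of `C` into the same columns padded by a zero entry; padding is linear and
injective, so independence of subsets of `C` is unchanged, and hence so is being a circuit.
-/

theorem IsCircuit.image {β γ : Type*} {M : Matroid β} {N : Matroid γ} {C : Set β} {f : β → γ}
    (hC : IsCircuit M C) (hE : f '' C ⊆ N.E)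
    (hindep : ∀ S ⊆ C, N.Indep (f '' S) ↔ M.Indep S) : IsCircuit N (f '' C) := by
  refine ⟨⟨fun h => hC.1.not_indep ((hindep C subset_rfl).1 h), hE⟩, fun D hD => ?_⟩
  have hDS : f '' (C ∩ f ⁻¹' D) = D := by
    rw [image_inter_preimage, inter_eq_right.2 hD.subset]
  have hSC : C ∩ f ⁻¹' D ⊂ C := by
    refine inter_subset_left.ssubset_of_ne fun hSC => hD.ne ?_
    rw [← hDS, hSC]
  rw [← hDS]
  exact (hindep _ hSC.subset).2 (hC.2 _ hSC)

theorem colIndep_image_iff {m n E E' F : Type*} [Semiring F] {A : Matrix m E F}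
    {B : Matrix n E' F} {S : Set E} {f : E → E'} (hf : InjOn f S)
    (g : (m → F) →ₗ[F] (n → F)) (hg : Function.Injective g)
    (hcol : ∀ x ∈ S, Bᵀ (f x) = g (Aᵀ x)) :
    ColIndep B (f '' S) ↔ ColIndep A S :=
  calc ColIndep B (f '' S) ↔ LinearIndepOn F (Bᵀ ∘ f) S :=
        (linearIndependent_equiv' (Equiv.Set.imageOfInjOn f S hf) rfl).symm
    _ ↔ LinearIndepOn F (g ∘ Aᵀ) S := linearIndepOn_congr hcol
    _ ↔ ColIndep A S := g.linearIndepOn_iff_of_injOn hg.injOn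

def padZero (m F : Type*) [Semiring F] : (m → F) →ₗ[F] (m ⊕ Unit → F) where
  toFun v := Sum.elim v 0
  map_add' _ _ := by ext (i | i) <;> simp
  map_smul' _ _ := by ext (i | i) <;> simp

theorem padZero_injective (m F : Type*) [Semiring F] : Function.Injective (padZero m F) :=
  fun _ _ h => funext fun i => congrFun h (Sum.inl i)

section update

variable {E ι : Type*} [DecidableEq E] {b : E}

theorem update_inl_inr_injective (i : ι) :
    Function.Injective (Function.update (Sum.inl : E → E ⊕ ι) b (Sum.inr i)) := by
  intro x y h
  by_cases hx : x = b <;> by_cases hy : y = b <;> simp_all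

theorem image_update_inl_inr {C : Set E} (i : ι) (hb : b ∈ C) :
    Function.update (Sum.inl : E → E ⊕ ι) b (Sum.inr i) '' C =
      Sum.inl '' (C \ {b}) ∪ {Sum.inr i} := by
  conv_lhs => rw [← insert_sdiff_self_of_mem hb]
  rw [image_insert_eq, Function.update_self, union_singleton]
  congr 1
  exact image_congr fun x hx => Function.update_of_ne hx.2 _ _

end update

theorem esMatrix_transpose_update_inl {m E F : Type*} [Ring F] [DecidableEq E]
    (A : Matrix m E F) {a x : E} (b : E) (α : F) (hxa : x ≠ a) :
    (esMatrix A a b b α)ᵀ (Function.update Sum.inl b (Sum.inr 1) x) = padZero m F (Aᵀ x) := by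
  by_cases hxb : x = b
  · subst hxb
    ext (i | i) <;> simp [esMatrix, splitMatrix, zColumn, padZero]
  · ext (i | i) <;> simp [esMatrix, splitMatrix, padZero, hxa, hxb]

variable {m E : Type*} [Fintype m] [Fintype E] [DecidableEq E] {p : ℕ} [Fact p.Prime]

theorem esSplitting_circuit_of_npCircuit_general (A : Matrix m E (ZMod p)) (a b : E)
    (α : ZMod p)
    (M : Matroid E) (hM : IsVectorMatroid M A)
    (M' : Matroid (E ⊕ Fin 2)) (hM' : IsVectorMatroid M' (esMatrix A a b b α))
    (C : Set E) (hC : IsNpCircuit M A a b C) (hbC : b ∈ C) (haC : a ∉ C) :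
    IsCircuit M' (Sum.inl '' (C \ {b}) ∪ {Sum.inr 1}) := by
  have hf := (update_inl_inr_injective (b := b) (1 : Fin 2)).injOn (s := C)
  rw [← image_update_inl_inr 1 hbC]
  refine hC.1.image (by simp [hM'.1]) fun S hS => ?_
  rw [hM'.2, hM.2]
  exact colIndep_image_iff (hf.mono hS) _ (padZero_injective m _) fun x hx =>
    esMatrix_transpose_update_inl A b α (ne_of_mem_of_not_mem (hS hx) haC)

theorem esSplitting_circuit_of_npCircuit (A : Matrix m E (ZMod p)) (a b : E)
    (α : ZMod p) (hα : α ≠ 0)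
    (M : Matroid E) (hM : IsVectorMatroid M A)
    (M' : Matroid (E ⊕ Fin 2)) (hM' : IsVectorMatroid M' (esMatrix A a b b α))
    (C : Set E) (hC : IsNpCircuit M A a b C) (hbC : b ∈ C) (haC : a ∉ C) :
    IsCircuit M' (Sum.inl '' (C \ {b}) ∪ {Sum.inr 1}) :=
  esSplitting_circuit_of_npCircuit_general A a b α M hM M' hM' C hC hbC haC
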